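/- Let x : [t_0, ∞) → ℝ^n be uniformly continuous, let α_γ be a 𝒦∞ function, and suppose lim_{t→∞} ∫_{t_0}^t α_γ(‖x(τ)‖) dτ exists and is finite. Then lim_{t→∞} x(t) = 0. -/

import Mathlib

open Filter Set MeasureTheory

def IsKInf (f : ℝ → ℝ) : Prop :=
  ContinuousOn f (Set.Ici 0) ∧ StrictMonoOn f (Set.Ici 0) ∧ f 0 = 0 ∧
    Filter.Tendsto f Filter.atTop Filter.atTop

/-- Barbalat-type lemma: if x is uniformly continuous on [t₀,∞), α_γ is 𝒦∞ and
∫_{t₀}^t α_γ(‖x(τ)‖) dτ converges as t → ∞, then x(t) → 0. -/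
theorem stmt_9 (n : ℕ) (t0 : ℝ) (x : ℝ → EuclideanSpace ℝ (Fin n))
    (hx : UniformContinuousOn x (Set.Ici t0))
    (αγ : ℝ → ℝ) (hαγ : IsKInf αγ)
    (hint : ∀ t, t0 ≤ t →
      IntervalIntegrable (fun τ => αγ ‖x τ‖) MeasureTheory.volume t0 t)
    (L : ℝ)
    (hconv : Filter.Tendsto (fun t => ∫ τ in t0..t, αγ ‖x τ‖) Filter.atTop (nhds L)) :
    Filter.Tendsto x Filter.atTop (nhds 0) := by
  obtain ⟨hcont, hmono, h0, htop⟩ := hαγ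
  by_contra hnot
  rw [Metric.tendsto_atTop] at hnot
  push_neg at hnot
  obtain ⟨ε, hε, hfreq⟩ := hnot
  rw [Metric.uniformContinuousOn_iff] at hx
  obtain ⟨δ, hδ, hδ'⟩ := hx (ε / 2) (half_pos hε)
  set c := αγ (ε / 2) with hc
  have hε2 : (0:ℝ) ≤ ε / 2 := (half_pos hε).le
  have hcpos : 0 < c := by
    have := hmono (le_refl (0:ℝ)) hε2 (half_pos hε)
    simpa [h0, hc] using this
  set d := δ / 2 with hd
  have hdpos : 0 < d := half_pos hδ
  have hgap : Tendsto (fun t => (∫ τ in t0..(t + d), αγ ‖x τ‖) -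
      ∫ τ in t0..t, αγ ‖x τ‖) atTop (nhds 0) := by
    have h1 : Tendsto (fun t => ∫ τ in t0..(t + d), αγ ‖x τ‖) atTop (nhds L) :=
      hconv.comp (tendsto_atTop_add_const_right _ d tendsto_id)
    simpa using h1.sub hconv
  have hdc : (0:ℝ) < d * c := mul_pos hdpos hcpos
  have hev : ∀ᶠ t in atTop, (∫ τ in t0..(t + d), αγ ‖x τ‖) -
      (∫ τ in t0..t, αγ ‖x τ‖) < d * c := hgap.eventually (gt_mem_nhds hdc)
  rw [eventually_atTop] at hev
  obtain ⟨N, hN⟩ := hev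
  obtain ⟨t, ht, hxt⟩ := hfreq (max N t0)
  have htN : N ≤ t := le_trans (le_max_left _ _) ht
  have ht0 : t0 ≤ t := le_trans (le_max_right _ _) ht
  have ht0' : t0 ≤ t + d := le_trans ht0 (by linarith)
  -- pointwise lower bound on [t, t+d]
  have hpt : ∀ τ ∈ Set.Icc t (t + d), c ≤ αγ ‖x τ‖ := by
    intro τ hτ
    have hτ0 : t0 ≤ τ := le_trans ht0 hτ.1
    have hdist : dist τ t < δ := by
      rw [Real.dist_eq, abs_of_nonneg (by linarith [hτ.1])]
      have := hτ.2
      have : τ - t ≤ d := by linarith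
      linarith
    have hclose : dist (x τ) (x t) < ε / 2 := hδ' τ hτ0 t ht0 hdist
    have hxt' : ε ≤ ‖x t‖ := by simpa [dist_zero_right] using hxt
    have hnorm : ε / 2 ≤ ‖x τ‖ := by
      have h := norm_sub_norm_le (x t) (x τ)
      rw [← dist_eq_norm] at h
      have := dist_comm (x t) (x τ)
      linarith [hclose, h, this ▸ hclose]
    exact hmono.monotoneOn hε2 (le_trans hε2 hnorm) hnorm
  have hii : IntervalIntegrable (fun τ => αγ ‖x τ‖) volume t (t + d) := by
    apply (hint (t + d) ht0').mono_set
    rw [Set.uIcc_of_le (by linarith), Set.uIcc_of_le ht0']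
    exact Set.Icc_subset_Icc ht0 le_rfl
  have hsplit : (∫ τ in t0..t, αγ ‖x τ‖) + (∫ τ in t..(t + d), αγ ‖x τ‖) =
      ∫ τ in t0..(t + d), αγ ‖x τ‖ :=
    intervalIntegral.integral_add_adjacent_intervals (hint t ht0) hii
  have hlb : d * c ≤ ∫ τ in t..(t + d), αγ ‖x τ‖ := by
    have := intervalIntegral.integral_mono_on (by linarith : t ≤ t + d)
      (intervalIntegrable_const (c := c)) hii hpt
    simpa [intervalIntegral.integral_const, smul_eq_mul] using this
  have hub := hN t htN
  have : (∫ τ in t0..(t + d), αγ ‖x τ‖) - (∫ τ in t0..t, αγ ‖x τ‖) =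
      ∫ τ in t..(t + d), αγ ‖x τ‖ := by linarith
  linarith
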